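/- arXiv:0710.4981 — 2 statements merged into one kernel-verified Lean document; each statement's English description precedes it below -/
import Mathlib

section
/- Let p be a fixed odd prime. For every continuous function f : ℤ_p → ℚ_p, the sequence N ↦ Σ_{x=0}^{p^N − 1} f(x)(−1)^x converges in ℚ_p as N → ∞, and its limit I_{−1}(f) satisfies I_{−1}(f(· + 1)) + I_{−1}(f) = 2 f(0). -/
/-!
Split `range (p ^ (N + 1))` into `p` blocks of length `p ^ N`. Since `p ^ N` is odd, the sign of
`p ^ N * t + y` is that of `t + y`, and since `p` is odd the signs `(-1) ^ t` of the blocks add up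
to one; so consecutive partial sums differ by an alternating sum of the increments
`f (y + p ^ N * t) - f y`, which are uniformly small by uniform continuity of `f` on the compact
space `ℤ_[p]`. In the nonarchimedean field `ℚ_[p]` this makes the partial sums Cauchy. Finally the
sum for `f (· + 1)` plus the sum for `f` telescopes to `f 0 + f (p ^ N)`, and `p ^ N → 0`.
-/

open Filter Finset Topology

section AlternatingSum

variable {R : Type*} [CommRing R]

def alternatingSum (g : ℕ → R) (n : ℕ) : R :=
  ∑ x ∈ range n, g x * (-1) ^ x

theorem Finset.sum_range_mul_eq_sum_sum {M : Type*} [AddCommMonoid M] (g : ℕ → M) (a b : ℕ) :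
    ∑ x ∈ range (a * b), g x = ∑ t ∈ range b, ∑ y ∈ range a, g (a * t + y) := by
  induction b with
  | zero => simp
  | succ b ih => rw [Nat.mul_succ, sum_range_add, ih, sum_range_succ]

theorem alternatingSum_mul_sub {m k : ℕ} (hm : Odd m) (hk : Odd k) (g : ℕ → R) :
    alternatingSum g (m * k) - alternatingSum g m =
      ∑ t ∈ range k, ∑ y ∈ range m, (g (m * t + y) - g y) * (-1) ^ (t + y) := by
  have hblocks : alternatingSum g m =
      ∑ t ∈ range k, ∑ y ∈ range m, g y * (-1) ^ (t + y) := by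
    rw [sum_comm, alternatingSum]
    refine sum_congr rfl fun y _ => ?_
    simp_rw [pow_add, mul_left_comm _ ((-1 : R) ^ _), ← sum_mul, neg_one_geom_sum,
      if_neg (Nat.not_even_iff_odd.mpr hk), one_mul]
  rw [hblocks, alternatingSum, sum_range_mul_eq_sum_sum, ← sum_sub_distrib]
  refine sum_congr rfl fun t _ => ?_
  rw [← sum_sub_distrib]
  refine sum_congr rfl fun y _ => ?_
  rw [sub_mul, pow_add _ (m * t), pow_mul, hm.neg_one_pow, ← pow_add]

theorem alternatingSum_shift_add (g : ℕ → R) (n : ℕ) :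
    alternatingSum (fun x => g (x + 1)) n + alternatingSum g n = g 0 - g n * (-1) ^ n := by
  rw [alternatingSum, alternatingSum, ← sum_add_distrib]
  convert sum_range_sub' (fun x => g x * (-1) ^ x) n using 1
  · refine sum_congr rfl fun x _ => ?_
    ring
  · simp

end AlternatingSum

theorem norm_alternatingSum_mul_sub_le {R : Type*} [NormedCommRing R] [NormOneClass R]
    [IsUltrametricDist R] {m k : ℕ} (hm : Odd m) (hk : Odd k) (g : ℕ → R) {ε : ℝ} (hε : 0 ≤ ε)
    (hg : ∀ t y, ‖g (m * t + y) - g y‖ ≤ ε) :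
    ‖alternatingSum g (m * k) - alternatingSum g m‖ ≤ ε := by
  rw [alternatingSum_mul_sub hm hk]
  refine IsUltrametricDist.norm_sum_le_of_forall_le_of_nonneg hε fun t _ => ?_
  refine IsUltrametricDist.norm_sum_le_of_forall_le_of_nonneg hε fun y _ => ?_
  rcases neg_one_pow_eq_or R (t + y) with h | h <;>
    simpa only [h, mul_one, mul_neg, norm_neg] using hg t y

namespace PadicInt

variable {p : ℕ} [Fact p.Prime]

theorem norm_p_lt_one : ‖(p : ℤ_[p])‖ < 1 := by
  rw [norm_p]
  exact inv_lt_one_of_one_lt₀ (mod_cast (Fact.out : p.Prime).one_lt)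

theorem tendstoUniformly_add_p_pow_mul :
    TendstoUniformly (fun N (z : ℤ_[p] × ℤ_[p]) => z.1 + (p : ℤ_[p]) ^ N * z.2) Prod.fst atTop := by
  rw [Metric.tendstoUniformly_iff]
  intro ε hε
  have hpow : Tendsto (fun N => (p : ℤ_[p]) ^ N) atTop (𝓝 0) :=
    tendsto_pow_atTop_nhds_zero_of_norm_lt_one norm_p_lt_one
  filter_upwards [(Metric.tendsto_nhds.mp hpow) ε hε] with N hN z
  rw [dist_zero_right] at hN
  calc dist z.1 (z.1 + (p : ℤ_[p]) ^ N * z.2)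
      = ‖(p : ℤ_[p]) ^ N * z.2‖ := by rw [dist_comm, dist_eq_norm, add_sub_cancel_left]
    _ ≤ ‖(p : ℤ_[p]) ^ N‖ := norm_mul_le_of_le le_rfl (norm_le_one _) |>.trans_eq (mul_one _)
    _ < ε := hN

theorem cauchySeq_alternatingSum_p_pow {R : Type*} [NormedCommRing R] [NormOneClass R]
    [IsUltrametricDist R] (hp : Odd p) (f : C(ℤ_[p], R)) :
    CauchySeq fun N => alternatingSum (fun x : ℕ => f x) (p ^ N) := by
  refine NonarchimedeanAddGroup.cauchySeq_of_tendsto_sub_nhds_zero (Metric.tendsto_nhds.mpr ?_)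
  intro ε hε
  have hf := (CompactSpace.uniformContinuous_of_continuous f.continuous).comp_tendstoUniformly
    tendstoUniformly_add_p_pow_mul
  filter_upwards [Metric.tendstoUniformly_iff.mp hf (ε / 2) (half_pos hε)] with N hN
  rw [dist_zero_right, pow_succ]
  refine (norm_alternatingSum_mul_sub_le hp.pow hp _ (half_pos hε).le fun t y => ?_).trans_lt
    (half_lt_self hε)
  have := hN ((y : ℤ_[p]), (t : ℤ_[p]))
  rw [dist_comm, dist_eq_norm] at this
  simpa [add_comm] using this.le

end PadicInt

theorem stmt_2 (p : ℕ) [Fact p.Prime] (hp : Odd p)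
    (f : C(ℤ_[p], ℚ_[p])) :
    ∃ I I₁ : ℚ_[p],
      Tendsto
        (fun N : ℕ => ∑ x ∈ Finset.range (p ^ N), f (x : ℤ_[p]) * (-1) ^ x)
        atTop (nhds I) ∧
      Tendsto
        (fun N : ℕ => ∑ x ∈ Finset.range (p ^ N), f ((x : ℤ_[p]) + 1) * (-1) ^ x)
        atTop (nhds I₁) ∧
      I₁ + I = 2 * f 0 := by
  obtain ⟨I, hI⟩ := cauchySeq_tendsto_of_complete (PadicInt.cauchySeq_alternatingSum_p_pow hp f)
  have hshift : ∀ N, alternatingSum (fun x : ℕ => f ((x : ℤ_[p]) + 1)) (p ^ N) =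
      f 0 + f ((p : ℤ_[p]) ^ N) - alternatingSum (fun x : ℕ => f x) (p ^ N) := fun N => by
    rw [eq_sub_iff_add_eq, ← Nat.cast_zero (R := ℤ_[p])]
    simpa [hp.pow.neg_one_pow] using alternatingSum_shift_add (fun x : ℕ => f x) (p ^ N)
  have hf_pow : Tendsto (fun N => f ((p : ℤ_[p]) ^ N)) atTop (𝓝 (f 0)) :=
    (f.continuous.tendsto 0).comp
      (tendsto_pow_atTop_nhds_zero_of_norm_lt_one PadicInt.norm_p_lt_one)
  refine ⟨I, 2 * f 0 - I, hI, ?_, by ring⟩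
  simp only [alternatingSum] at hshift hI
  simp_rw [hshift, two_mul]
  exact (tendsto_const_nhds.add hf_pow).sub hI
end

section
/- Let p be a fixed odd prime and let q ∈ ℚ_p satisfy ‖q − 1‖_p < 1 and q ≠ 1. For every integer n ≥ 1, the q-Euler polynomials and numbers satisfy the recurrence q · E_{n,q}(1) + E_{n,q} = 0; that is, q · lim_{N→∞} (1/[p^N]_{−q}) Σ_{y=0}^{p^N − 1} [1 + y]_q^n (−q)^y + lim_{N→∞} (1/[p^N]_{−q}) Σ_{y=0}^{p^N − 1} [y]_q^n (−q)^y = 0, both limits existing. -/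
/-!
Shifting the summation index telescopes `q · ∑_{y<M} [1+y]_q^n (-q)^y + ∑_{y<M} [y]_q^n (-q)^y`
to `-[M]_q^n (-q)^M` (as `[0]_q^n = 0`), and `[p^N]_q → 0` because `q ≡ 1 mod p` forces
`q^{p^N} ≡ 1 mod p^{N+1}`. Hence the recurrence holds in the limit as soon as `E_{n,q}` exists.
For that, expand `[y]_q^n` binomially into geometric progressions in `-q^{k+1}`; since `p^N` is odd
their sums are `(1 + q^{(k+1)p^N}) / (1 + q^{k+1})`, which converge, the denominators being units
because `p ≠ 2`.
-/

open Filter Finset Topology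

/-- The `q`-number `[x]_q` (with the junk value `0` at `q = 1`). -/
def qNumber {K : Type*} [Field K] (q : K) (x : ℕ) : K := (1 - q ^ x) / (1 - q)

/-- `(1 / [M]_{-q}) ∑_{y < M} f y (-q)^y`; the fermionic `q`-integral `I_{-q}(f)` is its limit
along `M = p ^ N`. -/
def fermionicSum {K : Type*} [Field K] (q : K) (M : ℕ) (f : ℕ → K) : K :=
  1 / ((1 + q ^ M) / (1 + q)) * ∑ y ∈ range M, f y * (-q) ^ y

section Field

variable {K : Type*} [Field K] (q : K) (M : ℕ)

lemma fermionicSum_sum {ι : Type*} (s : Finset ι) (c : ι → K) (g : ι → ℕ → K) :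
    fermionicSum q M (fun y => ∑ i ∈ s, c i * g i y)
      = ∑ i ∈ s, c i * fermionicSum q M (g i) := by
  simp only [fermionicSum, sum_mul, mul_sum]
  rw [sum_comm]
  exact sum_congr rfl fun i _ => sum_congr rfl fun y _ => by ring

lemma mul_fermionicSum_shift_add_fermionicSum (f : ℕ → K) :
    q * fermionicSum q M (fun y => f (1 + y)) + fermionicSum q M f
      = 1 / ((1 + q ^ M) / (1 + q)) * (f 0 - f M * (-q) ^ M) := by
  have hshift : ∑ y ∈ range M, f (y + 1) * (-q) ^ (y + 1) + f 0
      = ∑ y ∈ range M, f y * (-q) ^ y + f M * (-q) ^ M := by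
    simpa using (sum_range_succ' (fun y => f y * (-q) ^ y) M).symm.trans
      (sum_range_succ (fun y => f y * (-q) ^ y) M)
  have hmul : q * ∑ y ∈ range M, f (1 + y) * (-q) ^ y
      = -∑ y ∈ range M, f (y + 1) * (-q) ^ (y + 1) := by
    rw [mul_sum, ← sum_neg_distrib]
    exact sum_congr rfl fun y _ => by rw [add_comm 1 y, pow_succ]; ring
  simp only [fermionicSum]
  linear_combination (1 / ((1 + q ^ M) / (1 + q))) * (hmul - hshift)

lemma qNumber_pow_eq_sum (n y : ℕ) :
    qNumber q y ^ n
      = ∑ k ∈ range (n + 1), ((1 - q) ^ n)⁻¹ * ((-1) ^ k * n.choose k) * (q ^ k) ^ y := by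
  rw [qNumber, div_pow, div_eq_inv_mul, sub_eq_neg_add (1 : K) (q ^ y), add_pow, mul_sum]
  refine sum_congr rfl fun k _ => ?_
  rw [neg_pow, ← pow_mul, ← pow_mul, mul_comm y k]
  ring

variable {M}

lemma fermionicSum_pow_of_odd (hM : Odd M) {j : ℕ} (hj : 1 + q ^ (j + 1) ≠ 0) :
    fermionicSum q M (fun y => (q ^ j) ^ y)
      = (1 + q) / (1 + q ^ M) * ((1 + (q ^ M) ^ (j + 1)) / (1 + q ^ (j + 1))) := by
  have hgeom :
      (1 + q ^ (j + 1)) * ∑ y ∈ range M, (-q ^ (j + 1)) ^ y = 1 + (q ^ M) ^ (j + 1) := by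
    rw [← pow_mul, mul_comm M, pow_mul, ← neg_neg (1 + q ^ (j + 1) : K)]
    simpa [hM.neg_pow] using mul_neg_geom_sum (-q ^ (j + 1)) M
  have hterm : ∀ y, (q ^ j) ^ y * (-q) ^ y = (-q ^ (j + 1)) ^ y := fun y => by
    rw [← mul_pow, pow_succ]; ring
  rw [fermionicSum, one_div_div, sum_congr rfl fun y _ => hterm y, ← hgeom]
  field_simp

end Field

namespace Padic

variable {p : ℕ} [Fact p.Prime] {q : ℚ_[p]}

lemma norm_le_one_of_norm_sub_one_lt_one (hq : ‖q - 1‖ < 1) : ‖q‖ ≤ 1 := by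
  simpa using (IsUltrametricDist.norm_add_one_le_max_norm_one (q - 1)).trans (max_le hq.le le_rfl)

lemma norm_pow_sub_one_lt_one (hq : ‖q - 1‖ < 1) (m : ℕ) : ‖q ^ m - 1‖ < 1 := by
  let x : ℤ_[p] := ⟨q, norm_le_one_of_norm_sub_one_lt_one hq⟩
  have hx : (p : ℤ_[p]) ∣ x - 1 := (PadicInt.norm_lt_one_iff_dvd _).1 hq
  exact (PadicInt.norm_lt_one_iff_dvd (x ^ m - 1)).2 <| by
    simpa using hx.trans (sub_dvd_pow_sub_pow x 1 m)

lemma one_add_pow_ne_zero (hp : Odd p) (hq : ‖q - 1‖ < 1) (m : ℕ) : 1 + q ^ m ≠ 0 := by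
  intro h
  have h2 : ‖(2 : ℚ_[p])‖ = 1 := by
    simpa using (norm_natCast_eq_one_iff (p := p) (n := 2)).2 hp.coprime_two_right
  have := norm_pow_sub_one_lt_one hq m
  rw [show q ^ m - 1 = -2 by linear_combination h, norm_neg, h2] at this
  exact lt_irrefl _ this

lemma tendsto_pow_prime_pow_nhds_one (hq : ‖q - 1‖ < 1) :
    Tendsto (fun N : ℕ => q ^ p ^ N) atTop (𝓝 1) := by
  let x : ℤ_[p] := ⟨q, norm_le_one_of_norm_sub_one_lt_one hq⟩
  have hx : (p : ℤ_[p]) ∣ x - 1 := (PadicInt.norm_lt_one_iff_dvd _).1 hq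
  have hbound (N : ℕ) : ‖q ^ p ^ N - 1‖ ≤ ‖(p : ℚ_[p])‖ ^ (N + 1) := by
    obtain ⟨c, hc⟩ : (p : ℤ_[p]) ^ (N + 1) ∣ x ^ p ^ N - 1 := by
      simpa using dvd_sub_pow_of_dvd_sub hx N
    calc ‖q ^ p ^ N - 1‖ = ‖x ^ p ^ N - 1‖ := rfl
    _ = ‖(p : ℚ_[p])‖ ^ (N + 1) * ‖c‖ := by rw [hc, norm_mul, norm_pow]; rfl
    _ ≤ ‖(p : ℚ_[p])‖ ^ (N + 1) := mul_le_of_le_one_right (by positivity) c.norm_le_one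
  rw [tendsto_iff_norm_sub_tendsto_zero]
  refine squeeze_zero (fun _ => norm_nonneg _) hbound ?_
  exact (tendsto_pow_atTop_nhds_zero_of_lt_one (norm_nonneg _) norm_p_lt_one).comp
    (tendsto_add_atTop_nat 1)

end Padic

section FermionicLimits

variable {p : ℕ} [Fact p.Prime] {q : ℚ_[p]}

lemma tendsto_fermionicSum_pow (hp : Odd p) (hq : ‖q - 1‖ < 1) (j : ℕ) :
    Tendsto (fun N => fermionicSum q (p ^ N) (fun y => (q ^ j) ^ y)) atTop
      (𝓝 ((1 + q) / (1 + q ^ (j + 1)))) := by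
  have hj := Padic.one_add_pow_ne_zero hp hq (j + 1)
  have hlim := Padic.tendsto_pow_prime_pow_nhds_one hq
  have h := (tendsto_const_nhds (x := 1 + q)).div (hlim.const_add 1) (by norm_num) |>.mul
    (((hlim.pow (j + 1)).const_add 1).div_const (1 + q ^ (j + 1)))
  rw [one_pow, one_add_one_eq_two, div_mul_div_comm, mul_comm (1 + q),
    mul_div_mul_left _ _ two_ne_zero] at h
  exact h.congr fun N => (fermionicSum_pow_of_odd q hp.pow hj).symm

lemma exists_tendsto_fermionicSum_qNumber_pow (hp : Odd p) (hq : ‖q - 1‖ < 1) (n : ℕ) :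
    ∃ E, Tendsto (fun N => fermionicSum q (p ^ N) (fun y => qNumber q y ^ n)) atTop (𝓝 E) := by
  simp_rw [qNumber_pow_eq_sum, fermionicSum_sum]
  exact ⟨_, tendsto_finsetSum _ fun k _ => (tendsto_fermionicSum_pow hp hq k).const_mul _⟩

lemma tendsto_mul_fermionicSum_qNumber_pow_shift_add (hp : Odd p) (hq : ‖q - 1‖ < 1) {n : ℕ}
    (hn : n ≠ 0) :
    Tendsto (fun N => q * fermionicSum q (p ^ N) (fun y => qNumber q (1 + y) ^ n)
      + fermionicSum q (p ^ N) (fun y => qNumber q y ^ n)) atTop (𝓝 0) := by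
  have hlim := Padic.tendsto_pow_prime_pow_nhds_one hq
  have hq1 : 1 + q ≠ 0 := by simpa using Padic.one_add_pow_ne_zero hp hq 1
  have hscale : Tendsto (fun N => 1 / ((1 + q ^ p ^ N) / (1 + q))) atTop
      (𝓝 (1 / ((1 + 1) / (1 + q)))) :=
    tendsto_const_nhds.div ((hlim.const_add 1).div_const _) (by simp [hq1])
  have hqNumber : Tendsto (fun N => qNumber q (p ^ N)) atTop (𝓝 0) := by
    simpa [qNumber] using (hlim.const_sub 1).div_const (1 - q)
  have hdefect (N : ℕ) : q * fermionicSum q (p ^ N) (fun y => qNumber q (1 + y) ^ n)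
      + fermionicSum q (p ^ N) (fun y => qNumber q y ^ n)
      = 1 / ((1 + q ^ p ^ N) / (1 + q)) * (0 - qNumber q (p ^ N) ^ n * -q ^ p ^ N) := by
    rw [mul_fermionicSum_shift_add_fermionicSum q _ (fun y => qNumber q y ^ n), hp.pow.neg_pow]
    simp [qNumber, hn]
  have h := hscale.mul (tendsto_const_nhds (x := (0 : ℚ_[p])).sub ((hqNumber.pow n).mul hlim.neg))
  rw [zero_pow hn, zero_mul, sub_zero, mul_zero] at h
  exact h.congr fun N => (hdefect N).symm

end FermionicLimits

theorem stmt_7_general (p : ℕ) [Fact p.Prime] (hp : Odd p)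
    (q : ℚ_[p]) (hq : ‖q - 1‖ < 1)
    (n : ℕ) (hn : 1 ≤ n) :
    ∃ E1 E0 : ℚ_[p],
      Tendsto
        (fun N : ℕ =>
          (1 / ((1 + q ^ p ^ N) / (1 + q))) *
            ∑ y ∈ Finset.range (p ^ N),
              ((1 - q ^ (1 + y)) / (1 - q)) ^ n * (-q) ^ y)
        atTop (nhds E1) ∧
      Tendsto
        (fun N : ℕ =>
          (1 / ((1 + q ^ p ^ N) / (1 + q))) *
            ∑ y ∈ Finset.range (p ^ N),
              ((1 - q ^ y) / (1 - q)) ^ n * (-q) ^ y)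
        atTop (nhds E0) ∧
      q * E1 + E0 = 0 := by
  obtain ⟨E0, hE0⟩ := exists_tendsto_fermionicSum_qNumber_pow hp hq n
  have hq0 : q ≠ 0 := by rintro rfl; simp at hq
  have hdefect :=
    tendsto_mul_fermionicSum_qNumber_pow_shift_add hp hq (Nat.one_le_iff_ne_zero.mp hn)
  refine ⟨-E0 / q, E0, ?_, hE0, by field_simp; ring⟩
  have h := (hdefect.sub hE0).div_const q
  rw [zero_sub] at h
  exact h.congr fun N => by rw [add_sub_cancel_right, mul_div_cancel_left₀ _ hq0]; rfl

theorem stmt_7 (p : ℕ) [Fact p.Prime] (hp : Odd p)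
    (q : ℚ_[p]) (hq : ‖q - 1‖ < 1) (hq1 : q ≠ 1)
    (n : ℕ) (hn : 1 ≤ n) :
    ∃ E1 E0 : ℚ_[p],
      Tendsto
        (fun N : ℕ =>
          (1 / ((1 + q ^ p ^ N) / (1 + q))) *
            ∑ y ∈ Finset.range (p ^ N),
              ((1 - q ^ (1 + y)) / (1 - q)) ^ n * (-q) ^ y)
        atTop (nhds E1) ∧
      Tendsto
        (fun N : ℕ =>
          (1 / ((1 + q ^ p ^ N) / (1 + q))) *
            ∑ y ∈ Finset.range (p ^ N),
              ((1 - q ^ y) / (1 - q)) ^ n * (-q) ^ y)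
        atTop (nhds E0) ∧
      q * E1 + E0 = 0 :=
  stmt_7_general p hp q hq n hn
end
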